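/- arXiv:1005.0016 — 5 statements merged into one kernel-verified Lean document; each statement's English description precedes it below -/
import Mathlib

section
/- In any ortholattice, the condition (a ↔ b = 1 ⟺ a = b) holds if and only if the ortholattice is orthomodular (i.e., a ≤ b implies b = a ∪ (a' ∩ b)). -/
/-! If `a ↔ b = 1` forces `a = b`, compare `b ≥ a` with its Sasaki projection `a ⊔ (aᶜ ⊓ b)`:
both hooks between them are `1`, because `bᶜ ⊔ a` is the complement of `aᶜ ⊓ b`.
Conversely, `a → b = 1` says `a ⊓ (a ⊓ b)ᶜ = 0`, so orthomodularity applied to `a ⊓ b ≤ a`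
gives `a = a ⊓ b`, i.e. `a ≤ b`. -/

/-- An ortholattice: a bounded lattice with an orthocomplementation. -/
class Ortholattice (α : Type*) extends Lattice α, BoundedOrder α, Compl α where
  sup_compl : ∀ a : α, a ⊔ aᶜ = ⊤
  inf_compl : ∀ a : α, a ⊓ aᶜ = ⊥
  compl_antitone : ∀ a b : α, a ≤ b → bᶜ ≤ aᶜ
  compl_compl : ∀ a : α, aᶜᶜ = a

/-- The Sasaki hook `a → b := a' ∪ (a ∩ b)`. -/
def shook {α : Type*} [Ortholattice α] (a b : α) : α := aᶜ ⊔ (a ⊓ b)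

namespace Ortholattice

variable {α : Type*} [Ortholattice α]

theorem le_compl_comm {a b : α} (h : a ≤ bᶜ) : b ≤ aᶜ := by
  simpa only [compl_compl] using compl_antitone _ _ h

theorem compl_sup (a b : α) : (a ⊔ b)ᶜ = aᶜ ⊓ bᶜ :=
  le_antisymm
    (le_inf (compl_antitone _ _ le_sup_left) (compl_antitone _ _ le_sup_right))
    (le_compl_comm (sup_le (le_compl_comm inf_le_left) (le_compl_comm inf_le_right)))

theorem compl_inf (a b : α) : (a ⊓ b)ᶜ = aᶜ ⊔ bᶜ := by
  rw [← compl_compl (aᶜ ⊔ bᶜ), compl_sup, compl_compl, compl_compl]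

theorem compl_top : (⊤ : α)ᶜ = ⊥ := by
  simpa only [top_inf_eq] using inf_compl (⊤ : α)

theorem shook_eq_top_of_le {a b : α} (h : a ≤ b) : shook a b = ⊤ := by
  rw [shook, inf_eq_left.mpr h, sup_comm, sup_compl]

theorem shook_of_le {a b : α} (h : b ≤ a) : shook a b = aᶜ ⊔ b := by
  rw [shook, inf_eq_right.mpr h]

theorem shook_sasakiProj_eq_top {a b : α} (hab : a ≤ b) : shook b (a ⊔ (aᶜ ⊓ b)) = ⊤ := by
  rw [shook_of_le (sup_le hab inf_le_right), ← sup_assoc, sup_comm bᶜ, ← compl_compl a,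
    ← compl_inf, compl_compl, sup_comm, sup_compl]

theorem inf_compl_eq_bot_of_shook_eq_top {a b : α} (h : shook a b = ⊤) : a ⊓ (a ⊓ b)ᶜ = ⊥ := by
  rw [← compl_top, ← h, shook, compl_sup, compl_compl]

theorem le_of_shook_eq_top (hom : ∀ a b : α, a ≤ b → b = a ⊔ (aᶜ ⊓ b)) {a b : α}
    (h : shook a b = ⊤) : a ≤ b := by
  have hproj := hom (a ⊓ b) a inf_le_left
  rw [inf_comm (a ⊓ b)ᶜ, inf_compl_eq_bot_of_shook_eq_top h, sup_bot_eq] at hproj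
  exact hproj ▸ inf_le_right

end Ortholattice

/-- In any ortholattice, the condition `a ↔ b = 1 ⟺ a = b` (where `a ↔ b = 1`
means `a → b = 1` and `b → a = 1`) holds iff the ortholattice is orthomodular. -/
theorem stmt_1 {α : Type*} [Ortholattice α] :
    (∀ a b : α, (shook a b = ⊤ ∧ shook b a = ⊤) ↔ a = b) ↔
      (∀ a b : α, a ≤ b → b = a ⊔ (aᶜ ⊓ b)) := by
  constructor
  · intro hiff a b hab
    exact ((hiff _ _).mp ⟨Ortholattice.shook_eq_top_of_le (sup_le hab inf_le_right),
      Ortholattice.shook_sasakiProj_eq_top hab⟩).symm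
  · intro hom a b
    refine ⟨fun ⟨hab, hba⟩ => le_antisymm (Ortholattice.le_of_shook_eq_top hom hab)
      (Ortholattice.le_of_shook_eq_top hom hba), ?_⟩
    rintro rfl
    exact ⟨Ortholattice.shook_eq_top_of_le le_rfl, Ortholattice.shook_eq_top_of_le le_rfl⟩
end

section
/- For any subspaces M₀, M₁, N₀, N₁ of a Hilbert space (not necessarily closed), (M₀ + N₀) ∩ (M₁ + N₁) ⊆ N₀ + (M₀ ∩ (M₁ + ((M₀ + M₁) ∩ (N₀ + N₁)))). -/
namespace Submodule

variable {R E : Type*} [Ring R] [AddCommGroup E] [Module R E]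

theorem sub_mem_sup_inf_sup_of_add_eq_add {M₀ M₁ N₀ N₁ : Submodule R E} {m₀ m₁ n₀ n₁ : E}
    (hm₀ : m₀ ∈ M₀) (hm₁ : m₁ ∈ M₁) (hn₀ : n₀ ∈ N₀) (hn₁ : n₁ ∈ N₁)
    (h : m₀ + n₀ = m₁ + n₁) : m₀ - m₁ ∈ (M₀ ⊔ M₁) ⊓ (N₀ ⊔ N₁) := by
  have hdiff : m₀ - m₁ = n₁ - n₀ := by
    rw [sub_eq_sub_iff_add_eq_add, h, add_comm]
  refine ⟨sub_mem (mem_sup_left hm₀) (mem_sup_right hm₁), ?_⟩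
  rw [SetLike.mem_coe, hdiff]
  exact sub_mem (mem_sup_right hn₁) (mem_sup_left hn₀)

theorem sup_inf_sup_le_orthoarguesian (M₀ M₁ N₀ N₁ : Submodule R E) :
    (M₀ ⊔ N₀) ⊓ (M₁ ⊔ N₁) ≤ N₀ ⊔ (M₀ ⊓ (M₁ ⊔ ((M₀ ⊔ M₁) ⊓ (N₀ ⊔ N₁)))) := by
  rintro x ⟨hx₀, hx₁⟩
  obtain ⟨m₀, hm₀, n₀, hn₀, rfl⟩ := mem_sup.mp hx₀
  obtain ⟨m₁, hm₁, n₁, hn₁, h⟩ := mem_sup.mp hx₁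
  have hdiff := sub_mem_sup_inf_sup_of_add_eq_add hm₀ hm₁ hn₀ hn₁ h.symm
  have hm₀' : m₀ ∈ M₁ ⊔ ((M₀ ⊔ M₁) ⊓ (N₀ ⊔ N₁)) :=
    mem_sup.mpr ⟨m₁, hm₁, m₀ - m₁, hdiff, add_sub_cancel m₁ m₀⟩
  exact mem_sup.mpr ⟨n₀, hn₀, m₀, ⟨hm₀, hm₀'⟩, add_comm n₀ m₀⟩

end Submodule

theorem stmt_5_general {E : Type*} [NormedAddCommGroup E] [InnerProductSpace ℂ E]
    (M₀ M₁ N₀ N₁ : Submodule ℂ E) :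
    (M₀ ⊔ N₀) ⊓ (M₁ ⊔ N₁) ≤ N₀ ⊔ (M₀ ⊓ (M₁ ⊔ ((M₀ ⊔ M₁) ⊓ (N₀ ⊔ N₁)))) :=
  Submodule.sup_inf_sup_le_orthoarguesian M₀ M₁ N₀ N₁

/-- For any subspaces `M₀, M₁, N₀, N₁` of a Hilbert space (not necessarily
closed), with `⊔` the subspace sum and `⊓` intersection:
`(M₀+N₀) ∩ (M₁+N₁) ⊆ N₀ + (M₀ ∩ (M₁ + ((M₀+M₁) ∩ (N₀+N₁))))`. -/
theorem stmt_5 {E : Type*} [NormedAddCommGroup E] [InnerProductSpace ℂ E]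
    [CompleteSpace E] (M₀ M₁ N₀ N₁ : Submodule ℂ E) :
    (M₀ ⊔ N₀) ⊓ (M₁ ⊔ N₁) ≤ N₀ ⊔ (M₀ ⊓ (M₁ ⊔ ((M₀ ⊔ M₁) ⊓ (N₀ ⊔ N₁)))) :=
  stmt_5_general M₀ M₁ N₀ N₁
end

section
/- For any subspaces M₀, M₁, M₂, N₀, N₁, N₂ of a Hilbert space, defining T₁(i,j) = (Mᵢ + Mⱼ) ∩ (Nᵢ + Nⱼ) and T₂(i,j,k) = T₁(i,j) ∩ (T₁(i,k) + T₁(j,k)), the inclusion (M₀+N₀) ∩ (M₁+N₁) ∩ (M₂+N₂) ⊆ N₀ + (M₀ ∩ (M₁ + T₂(0,1,2))) holds. -/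
/-! If `x = mᵢ + nᵢ` with `mᵢ ∈ Mᵢ`, `nᵢ ∈ Nᵢ`, then `mᵢ - mⱼ = nⱼ - nᵢ` lies in `T₁(i,j)`, and
`m₀ - m₁ = (m₀ - m₂) - (m₁ - m₂)` also lies in `T₁(0,2) + T₁(1,2)`, hence in `T₂(0,1,2)`.
So `x = n₀ + (m₁ + (m₀ - m₁))` is in the right-hand side. -/

namespace Submodule

variable {R V : Type*} [Ring R] [AddCommGroup V] [Module R V]

theorem sub_mem_sup_inf_sup {M M' N N' : Submodule R V} {m m' n n' : V}
    (hm : m ∈ M) (hm' : m' ∈ M') (hn : n ∈ N) (hn' : n' ∈ N') (h : m + n = m' + n') :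
    m - m' ∈ (M ⊔ M') ⊓ (N ⊔ N') := by
  have hmn : m - m' = n' - n := by rw [sub_eq_sub_iff_add_eq_add, h, add_comm]
  refine ⟨sub_mem (mem_sup_left hm) (mem_sup_right hm'), ?_⟩
  rw [SetLike.mem_coe, hmn]
  exact sub_mem (mem_sup_right hn') (mem_sup_left hn)

end Submodule

open Submodule in
theorem stmt_6_general {E : Type*} [NormedAddCommGroup E] [InnerProductSpace ℂ E]
    (M₀ M₁ M₂ N₀ N₁ N₂ : Submodule ℂ E) :
    (M₀ ⊔ N₀) ⊓ (M₁ ⊔ N₁) ⊓ (M₂ ⊔ N₂) ≤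
      N₀ ⊔ (M₀ ⊓ (M₁ ⊔
        (((M₀ ⊔ M₁) ⊓ (N₀ ⊔ N₁)) ⊓
          (((M₀ ⊔ M₂) ⊓ (N₀ ⊔ N₂)) ⊔ ((M₁ ⊔ M₂) ⊓ (N₁ ⊔ N₂)))))) := by
  rintro x ⟨⟨hx₀, hx₁⟩, hx₂⟩
  obtain ⟨m₀, hm₀, n₀, hn₀, rfl⟩ := mem_sup.1 hx₀
  obtain ⟨m₁, hm₁, n₁, hn₁, h₁⟩ := mem_sup.1 hx₁
  obtain ⟨m₂, hm₂, n₂, hn₂, h₂⟩ := mem_sup.1 hx₂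
  have h₀₁ := sub_mem_sup_inf_sup hm₀ hm₁ hn₀ hn₁ h₁.symm
  have h₀₂ := sub_mem_sup_inf_sup hm₀ hm₂ hn₀ hn₂ h₂.symm
  have h₁₂ := sub_mem_sup_inf_sup hm₁ hm₂ hn₁ hn₂ (h₁.trans h₂.symm)
  have hT₂ : m₀ - m₁ ∈ ((M₀ ⊔ M₁) ⊓ (N₀ ⊔ N₁)) ⊓
      (((M₀ ⊔ M₂) ⊓ (N₀ ⊔ N₂)) ⊔ ((M₁ ⊔ M₂) ⊓ (N₁ ⊔ N₂))) := by
    refine ⟨h₀₁, ?_⟩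
    rw [SetLike.mem_coe, ← sub_sub_sub_cancel_right m₀ m₁ m₂]
    exact sub_mem (mem_sup_left h₀₂) (mem_sup_right h₁₂)
  have hm₀' : m₀ ∈ M₀ ⊓ (M₁ ⊔ _) :=
    ⟨hm₀, add_sub_cancel m₁ m₀ ▸ add_mem (mem_sup_left hm₁) (mem_sup_right hT₂)⟩
  rw [add_comm]
  exact add_mem (mem_sup_left hn₀) (mem_sup_right hm₀')

/-- The `n = 2` case of the generalized orthoarguesian subspace condition:
for subspaces `M₀, M₁, M₂, N₀, N₁, N₂` of a Hilbert space, with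
`T₁(i,j) = (Mᵢ + Mⱼ) ∩ (Nᵢ + Nⱼ)` and `T₂(0,1,2) = T₁(0,1) ∩ (T₁(0,2) + T₁(1,2))`,
we have `(M₀+N₀) ∩ (M₁+N₁) ∩ (M₂+N₂) ⊆ N₀ + (M₀ ∩ (M₁ + T₂(0,1,2)))`. -/
theorem stmt_6 {E : Type*} [NormedAddCommGroup E] [InnerProductSpace ℂ E]
    [CompleteSpace E] (M₀ M₁ M₂ N₀ N₁ N₂ : Submodule ℂ E) :
    (M₀ ⊔ N₀) ⊓ (M₁ ⊔ N₁) ⊓ (M₂ ⊔ N₂) ≤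
      N₀ ⊔ (M₀ ⊓ (M₁ ⊔
        (((M₀ ⊔ M₁) ⊓ (N₀ ⊔ N₁)) ⊓
          (((M₀ ⊔ M₂) ⊓ (N₀ ⊔ N₂)) ⊔ ((M₁ ⊔ M₂) ⊓ (N₁ ⊔ N₂)))))) :=
  stmt_6_general M₀ M₁ M₂ N₀ N₁ N₂
end

section
/- For closed subspaces M₀, M₁, N₀, N₁ of a Hilbert space with M₀ ⊥ N₀ and M₁ ⊥ N₁, one has (M₀ ∨ N₀) ∩ (M₁ ∨ N₁) ≤ N₀ ∨ (M₀ ∩ (M₁ ∨ ((M₀ ∨ M₁) ∩ (N₀ ∨ N₁)))), where ∨ is the closed-subspace join. -/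
/-!
Two closed orthogonal subspaces have a closed sum: with `P` the projection onto `Mᗮ`, one has
`M + N = P⁻¹(N)`. So every join in the hypothesis is a plain sum, and the inequality becomes one
about sums of submodules, true in any module: if `x = m₀ + n₀ = m₁ + n₁`, then
`m₀ - m₁ = n₁ - n₀` lies in `(M₀ + M₁) ∩ (N₀ + N₁)`, hence `m₀ ∈ M₁ + (M₀ + M₁) ∩ (N₀ + N₁)`
and `x = n₀ + m₀`.
-/

/-- The join of two closed subspaces: the closure of their subspace sum. -/
noncomputable def cjoin {E : Type*} [NormedAddCommGroup E] [InnerProductSpace ℂ E]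
    (M N : Submodule ℂ E) : Submodule ℂ E :=
  (M ⊔ N).topologicalClosure

namespace Submodule

section Orthogonal

variable {𝕜 E : Type*} [RCLike 𝕜] [NormedAddCommGroup E] [InnerProductSpace 𝕜 E]
  {U V : Submodule 𝕜 E} [U.HasOrthogonalProjection]

theorem IsOrtho.sup_eq_comap_starProjection_orthogonal (h : U ⟂ V) :
    U ⊔ V = V.comap (Uᗮ.starProjection : E →ₗ[𝕜] E) := by
  apply le_antisymm
  · refine sup_le (fun u hu => ?_) (fun v hv => ?_)
    · have : Uᗮ.starProjection u = 0 :=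
        (starProjection_apply_eq_zero_iff _).2 (U.le_orthogonal_orthogonal hu)
      simp [this]
    · have : Uᗮ.starProjection v = v := starProjection_eq_self_iff.2 (h.symm hv)
      simpa [this] using hv
  · intro x hx
    rw [← U.starProjection_add_starProjection_orthogonal x]
    exact add_mem_sup (starProjection_apply_mem U x) hx

theorem IsOrtho.isClosed_sup (hV : IsClosed (V : Set E)) (h : U ⟂ V) :
    IsClosed ((U ⊔ V : Submodule 𝕜 E) : Set E) := by
  rw [h.sup_eq_comap_starProjection_orthogonal]
  exact hV.preimage (Uᗮ.starProjection).continuous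

end Orthogonal

theorem sup_inf_sup_le {R M : Type*} [Ring R] [AddCommGroup M] [Module R M]
    (M₀ M₁ N₀ N₁ : Submodule R M) :
    (M₀ ⊔ N₀) ⊓ (M₁ ⊔ N₁) ≤ N₀ ⊔ (M₀ ⊓ (M₁ ⊔ ((M₀ ⊔ M₁) ⊓ (N₀ ⊔ N₁)))) := by
  rintro x ⟨hx₀, hx₁⟩
  obtain ⟨m₀, hm₀, n₀, hn₀, rfl⟩ := mem_sup.1 hx₀
  obtain ⟨m₁, hm₁, n₁, hn₁, hx⟩ := mem_sup.1 hx₁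
  have hd : m₀ - m₁ ∈ (M₀ ⊔ M₁) ⊓ (N₀ ⊔ N₁) := by
    refine ⟨sub_mem (mem_sup_left hm₀) (mem_sup_right hm₁), ?_⟩
    rw [show m₀ - m₁ = n₁ - n₀ by rw [sub_eq_sub_iff_add_eq_add, ← hx, add_comm]]
    exact sub_mem (mem_sup_right hn₁) (mem_sup_left hn₀)
  have hm₀' : m₀ ∈ M₁ ⊔ ((M₀ ⊔ M₁) ⊓ (N₀ ⊔ N₁)) := by
    simpa using add_mem_sup hm₁ hd
  rw [add_comm]
  exact add_mem_sup hn₀ ⟨hm₀, hm₀'⟩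

end Submodule

open Submodule

section cjoin

variable {E : Type*} [NormedAddCommGroup E] [InnerProductSpace ℂ E]

theorem le_cjoin (M N : Submodule ℂ E) : M ⊔ N ≤ cjoin M N :=
  le_topologicalClosure _

theorem cjoin_mono {M M' N N' : Submodule ℂ E} (hM : M ≤ M') (hN : N ≤ N') :
    cjoin M N ≤ cjoin M' N' :=
  topologicalClosure_mono (sup_le_sup hM hN)

theorem cjoin_eq_sup {M N : Submodule ℂ E} [M.HasOrthogonalProjection]
    (hN : IsClosed (N : Set E)) (h : M ⟂ N) : cjoin M N = M ⊔ N :=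
  (h.isClosed_sup hN).submodule_topologicalClosure_eq

end cjoin

/-- For closed subspaces `M₀, M₁, N₀, N₁` of a Hilbert space with `M₀ ⊥ N₀`
and `M₁ ⊥ N₁`, one has
`(M₀ ∨ N₀) ∩ (M₁ ∨ N₁) ≤ N₀ ∨ (M₀ ∩ (M₁ ∨ ((M₀ ∨ M₁) ∩ (N₀ ∨ N₁))))`,
where `∨` is the closed-subspace join. -/
theorem stmt_7 {E : Type*} [NormedAddCommGroup E] [InnerProductSpace ℂ E]
    [CompleteSpace E] (M₀ M₁ N₀ N₁ : Submodule ℂ E)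
    (hM₀ : IsClosed (M₀ : Set E)) (hM₁ : IsClosed (M₁ : Set E))
    (hN₀ : IsClosed (N₀ : Set E)) (hN₁ : IsClosed (N₁ : Set E))
    (h₀ : ∀ x ∈ M₀, ∀ y ∈ N₀, inner ℂ x y = (0 : ℂ))
    (h₁ : ∀ x ∈ M₁, ∀ y ∈ N₁, inner ℂ x y = (0 : ℂ)) :
    cjoin M₀ N₀ ⊓ cjoin M₁ N₁ ≤
      cjoin N₀ (M₀ ⊓ cjoin M₁ (cjoin M₀ M₁ ⊓ cjoin N₀ N₁)) := by
  have : CompleteSpace M₀ := hM₀.completeSpace_coe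
  have : CompleteSpace M₁ := hM₁.completeSpace_coe
  rw [cjoin_eq_sup hN₀ (isOrtho_iff_inner_eq.2 h₀), cjoin_eq_sup hN₁ (isOrtho_iff_inner_eq.2 h₁)]
  refine (sup_inf_sup_le M₀ M₁ N₀ N₁).trans ?_
  exact (le_cjoin _ _).trans <| cjoin_mono le_rfl <| inf_le_inf_left _ <|
    (sup_le_sup_left (inf_le_inf (le_cjoin _ _) (le_cjoin _ _)) _).trans (le_cjoin _ _)
end

section
/- In a 3-dimensional real (or complex) inner product space, the specific 3OA instance holds for the lines a = span{(0,0,1)}, b = span{(1,0,0)}, q = span{(1,-2,-1)}, n = span{(1,1,-1)}: since a ⊥ b and q ⊥ n, one has (a + b) ∩ (q + n) ⊆ b + (a ∩ (q + ((a + q) ∩ (b + n)))). -/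
/-!
Modularity of the submodule lattice gives `q ⊔ ((a ⊔ q) ⊓ m) = (a ⊔ q) ⊓ (q ⊔ m)`, which
contains `a` as soon as `a ≤ q ⊔ m`.
Here `a ≤ q ⊔ (b ⊔ n)` because `(0,0,1) = (1,0,0) - ((1,-2,-1) + 2 (1,1,-1)) / 3`; then
`a ⊓ (q ⊔ ((a ⊔ q) ⊓ (b ⊔ n))) = a` and the right-hand side is all of `a ⊔ b`.
-/

open Submodule

theorem le_sup_inf_sup_of_le_sup {α : Type*} [Lattice α] [IsModularLattice α] {a q m : α}
    (h : a ≤ q ⊔ m) : a ≤ q ⊔ (a ⊔ q) ⊓ m := by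
  rw [inf_comm, ← sup_inf_assoc_of_le m (le_sup_right : q ≤ a ⊔ q)]
  exact le_inf h le_sup_left

theorem inner_eq_zero_of_mem_span_singleton {𝕜 E : Type*} [RCLike 𝕜] [NormedAddCommGroup E]
    [InnerProductSpace 𝕜 E] {u v x y : E} (huv : inner 𝕜 u v = 0) (hx : x ∈ 𝕜 ∙ u)
    (hy : y ∈ 𝕜 ∙ v) : inner 𝕜 x y = 0 :=
  (isOrtho_span.2 (by simpa using huv)).inner_eq hx hy

theorem toLp_e₃_mem_span_sup :
    (WithLp.toLp 2 ![0, 0, 1] : EuclideanSpace ℝ (Fin 3)) ∈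
      (ℝ ∙ WithLp.toLp 2 ![1, -2, -1]) ⊔
        ((ℝ ∙ WithLp.toLp 2 ![1, 0, 0]) ⊔ (ℝ ∙ WithLp.toLp 2 ![1, 1, -1])) := by
  have hcomb : (WithLp.toLp 2 ![0, 0, 1] : EuclideanSpace ℝ (Fin 3)) =
      (-1 / 3 : ℝ) • WithLp.toLp 2 ![1, -2, -1] +
        (WithLp.toLp 2 ![1, 0, 0] + (-2 / 3 : ℝ) • WithLp.toLp 2 ![1, 1, -1]) := by
    ext i
    fin_cases i <;> simp <;> norm_num
  rw [hcomb]
  exact add_mem_sup (smul_mem _ _ (mem_span_singleton_self _))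
    (add_mem_sup (mem_span_singleton_self _) (smul_mem _ _ (mem_span_singleton_self _)))

/-- Verification of the 3OA instance for Bub's Kochen–Specker vectors in ℝ³:
with `a = span{(0,0,1)}`, `b = span{(1,0,0)}`, `q = span{(1,-2,-1)}`,
`n = span{(1,1,-1)}`, we have `a ⊥ b`, `q ⊥ n`, and
`(a + b) ∩ (q + n) ⊆ b + (a ∩ (q + ((a + q) ∩ (b + n))))`. -/
theorem stmt_14 :
    let a : Submodule ℝ (EuclideanSpace ℝ (Fin 3)) :=
      Submodule.span ℝ {WithLp.toLp 2 ![0, 0, 1]}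
    let b : Submodule ℝ (EuclideanSpace ℝ (Fin 3)) :=
      Submodule.span ℝ {WithLp.toLp 2 ![1, 0, 0]}
    let q : Submodule ℝ (EuclideanSpace ℝ (Fin 3)) :=
      Submodule.span ℝ {WithLp.toLp 2 ![1, -2, -1]}
    let n : Submodule ℝ (EuclideanSpace ℝ (Fin 3)) :=
      Submodule.span ℝ {WithLp.toLp 2 ![1, 1, -1]}
    (∀ x ∈ a, ∀ y ∈ b, inner ℝ x y = (0 : ℝ)) ∧
    (∀ x ∈ q, ∀ y ∈ n, inner ℝ x y = (0 : ℝ)) ∧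
    (a ⊔ b) ⊓ (q ⊔ n) ≤ b ⊔ (a ⊓ (q ⊔ ((a ⊔ q) ⊓ (b ⊔ n)))) := by
  intro a b q n
  refine ⟨fun x hx y hy => inner_eq_zero_of_mem_span_singleton ?_ hx hy,
    fun x hx y hy => inner_eq_zero_of_mem_span_singleton ?_ hx hy, ?_⟩
  · simp [PiLp.inner_apply, Fin.sum_univ_three]
  · simp [PiLp.inner_apply, Fin.sum_univ_three]
    norm_num
  · have ha : a ≤ q ⊔ ((a ⊔ q) ⊓ (b ⊔ n)) :=
      le_sup_inf_sup_of_le_sup ((span_singleton_le_iff_mem _ _).2 toLp_e₃_mem_span_sup)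
    calc (a ⊔ b) ⊓ (q ⊔ n) ≤ b ⊔ a := inf_le_left.trans (sup_comm a b).le
      _ ≤ b ⊔ (a ⊓ (q ⊔ ((a ⊔ q) ⊓ (b ⊔ n)))) := sup_le_sup_left (le_inf le_rfl ha) b
end
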